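/- arXiv:2502.12864 — 7 statements merged into one kernel-verified Lean document; each statement's English description precedes it below -/
import Mathlib

section
/- Let a0, b0, c0, d0 be positive real numbers satisfying a0/(a0+b0) > c0/(c0+d0). Then there exist positive real numbers a1, a2, b1, b2, c1, c2, d1, d2 such that a1 + a2 = a0, b1 + b2 = b0, c1 + c2 = c0, d1 + d2 = d0, and for each i = 1, 2 one has ai/(ai+bi) < ci/(ci+di). -/
/-- Existence of the classic Simpson's Paradox: if the aggregate proportions
satisfy `a0/(a0+b0) > c0/(c0+d0)`, then the masses can be split into two
subgroups in which both proportion inequalities are reversed. -/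
theorem simpson_paradox_exists_gt
    (a0 b0 c0 d0 : ℝ) (ha : 0 < a0) (hb : 0 < b0) (hc : 0 < c0) (hd : 0 < d0)
    (h : a0 / (a0 + b0) > c0 / (c0 + d0)) :
    ∃ a1 a2 b1 b2 c1 c2 d1 d2 : ℝ,
      0 < a1 ∧ 0 < a2 ∧ 0 < b1 ∧ 0 < b2 ∧ 0 < c1 ∧ 0 < c2 ∧ 0 < d1 ∧ 0 < d2 ∧
      a1 + a2 = a0 ∧ b1 + b2 = b0 ∧ c1 + c2 = c0 ∧ d1 + d2 = d0 ∧
      a1 / (a1 + b1) < c1 / (c1 + d1) ∧ a2 / (a2 + b2) < c2 / (c2 + d2) := by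
  set ε : ℝ := min (a0/2) (b0*c0/(4*(c0+2*d0))) with hε
  set η : ℝ := min (d0/2) (b0*c0/(8*a0)) with hη
  have hεpos : 0 < ε := lt_min (by linarith) (by positivity)
  have hηpos : 0 < η := lt_min (by linarith) (by positivity)
  have hεa : ε ≤ a0/2 := min_le_left _ _
  have hεb : ε ≤ b0*c0/(4*(c0+2*d0)) := min_le_right _ _
  have hηd : η ≤ d0/2 := min_le_left _ _
  have hηb : η ≤ b0*c0/(8*a0) := min_le_right _ _
  refine ⟨ε, a0 - ε, b0/2, b0/2, c0/2, c0/2, d0 - η, η,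
    hεpos, by linarith, by linarith, by linarith, by linarith, by linarith,
    by linarith, hηpos, by ring, by ring, by ring, by ring, ?_, ?_⟩
  · rw [div_lt_div_iff₀ (by linarith) (by linarith)]
    have h1 : ε * (4*(c0+2*d0)) ≤ b0*c0 := (le_div_iff₀ (by positivity)).mp hεb
    nlinarith
  · rw [div_lt_div_iff₀ (by linarith) (by linarith)]
    have h2 : η * (8*a0) ≤ b0*c0 := (le_div_iff₀ (by positivity)).mp hηb
    nlinarith
end

section
/- Let a0, b0, c0, d0 be positive real numbers satisfying a0/(a0+b0) < c0/(c0+d0). Then there exist positive real numbers a1, a2, b1, b2, c1, c2, d1, d2 such that a1 + a2 = a0, b1 + b2 = b0, c1 + c2 = c0, d1 + d2 = d0, and for each i = 1, 2 one has ai/(ai+bi) > ci/(ci+di). -/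
/-- Existence of the classic Simpson's Paradox in the opposite direction: if the
aggregate proportions satisfy `a0/(a0+b0) < c0/(c0+d0)`, then the masses can be
split into two subgroups in which both proportion inequalities are reversed. -/
theorem simpson_paradox_exists_lt
    (a0 b0 c0 d0 : ℝ) (ha : 0 < a0) (hb : 0 < b0) (hc : 0 < c0) (hd : 0 < d0)
    (h : a0 / (a0 + b0) < c0 / (c0 + d0)) :
    ∃ a1 a2 b1 b2 c1 c2 d1 d2 : ℝ,
      0 < a1 ∧ 0 < a2 ∧ 0 < b1 ∧ 0 < b2 ∧ 0 < c1 ∧ 0 < c2 ∧ 0 < d1 ∧ 0 < d2 ∧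
      a1 + a2 = a0 ∧ b1 + b2 = b0 ∧ c1 + c2 = c0 ∧ d1 + d2 = d0 ∧
      a1 / (a1 + b1) > c1 / (c1 + d1) ∧ a2 / (a2 + b2) > c2 / (c2 + d2) := by
  set ε : ℝ := min 1 (min (min (a0/2) (b0/2)) (min (min (c0/2) (d0/2))
      (min (a0/(2*(c0+1))) (d0/(2*(b0+1)))))) with hε
  have hεpos : 0 < ε := by
    apply lt_min (by norm_num)
    apply lt_min (lt_min (by positivity) (by positivity))
    apply lt_min (lt_min (by positivity) (by positivity))
    exact lt_min (by positivity) (by positivity)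
  have hε1 : ε ≤ 1 := min_le_left _ _
  have hεa : ε ≤ a0/2 := le_trans (min_le_right _ _) (le_trans (min_le_left _ _) (min_le_left _ _))
  have hεb : ε ≤ b0/2 := le_trans (min_le_right _ _) (le_trans (min_le_left _ _) (min_le_right _ _))
  have hεc : ε ≤ c0/2 := le_trans (min_le_right _ _) (le_trans (min_le_right _ _)
    (le_trans (min_le_left _ _) (min_le_left _ _)))
  have hεd : ε ≤ d0/2 := le_trans (min_le_right _ _) (le_trans (min_le_right _ _)
    (le_trans (min_le_left _ _) (min_le_right _ _)))
  have hεac : ε ≤ a0/(2*(c0+1)) := le_trans (min_le_right _ _) (le_trans (min_le_right _ _)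
    (le_trans (min_le_right _ _) (min_le_left _ _)))
  have hεdb : ε ≤ d0/(2*(b0+1)) := le_trans (min_le_right _ _) (le_trans (min_le_right _ _)
    (le_trans (min_le_right _ _) (min_le_right _ _)))
  have hε2 : ε^2 ≤ ε := by nlinarith
  have hεac' : 2*ε*(c0+1) ≤ a0 := by
    have := (le_div_iff₀ (by positivity : (0:ℝ) < 2*(c0+1))).mp hεac
    nlinarith
  have hεdb' : 2*ε*(b0+1) ≤ d0 := by
    have := (le_div_iff₀ (by positivity : (0:ℝ) < 2*(b0+1))).mp hεdb
    nlinarith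
  have ha1 : 0 < a0 - ε := by linarith
  have hb2 : 0 < b0 - ε^2 := by nlinarith
  have hc1 : 0 < c0 - ε^2 := by nlinarith
  have hd2 : 0 < d0 - ε := by linarith
  have hεsq : 0 < ε^2 := by positivity
  refine ⟨a0 - ε, ε, ε^2, b0 - ε^2, c0 - ε^2, ε^2, ε, d0 - ε, ha1, hεpos, hεsq, hb2,
    hc1, hεsq, hεpos, hd2, by ring, by ring, by ring, by ring, ?_, ?_⟩
  · rw [gt_iff_lt, div_lt_div_iff₀ (by linarith) (by linarith)]
    nlinarith [hεac', hε2, hεpos, mul_pos hεpos hεpos]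
  · rw [gt_iff_lt, div_lt_div_iff₀ (by linarith) (by linarith)]
    nlinarith [hεdb', hε2, hεpos, mul_pos hεpos hεpos]
end

section
/- Let a0, b0, c0, d0 be positive real numbers with a0 + b0 ≤ 1, c0 + d0 ≤ 1, and a0/(a0+b0) > c0/(c0+d0). Define A_l = tan(arctan(c0/d0)/4), B_l = tan(π/4 + arctan(a0/b0)/2), a1 = A_l·(a0 − B_l·b0)/(A_l − B_l), b1 = (a0 − B_l·b0)/(A_l − B_l), a2 = a0 − a1, b2 = b0 − b1, and C_l = tan(arctan(c0/d0)/2), D_l = tan(3π/8 + arctan(a0/b0)/4), c1 = C_l·(c0 − D_l·d0)/(C_l − D_l), d1 = (c0 − D_l·d0)/(C_l − D_l), c2 = c0 − c1, d2 = d0 − d1. Then a1, b1, a2, b2, c1, d1, c2, d2 are all positive, a1 + a2 = a0, b1 + b2 = b0, c1 + c2 = c0, d1 + d2 = d0, and a1/(a1+b1) < c1/(c1+d1) and a2/(a2+b2) < c2/(c2+d2). -/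
open Real

set_option maxHeartbeats 2000000 in
/-- Proposition 1, part i: the explicit numerical construction of Simpson's
Paradox from aggregate values with `a0/(a0+b0) > c0/(c0+d0)`. -/
theorem simpson_numerical_gt
    (a0 b0 c0 d0 Al Bl Cl Dl a1 b1 a2 b2 c1 d1 c2 d2 : ℝ)
    (ha : 0 < a0) (hb : 0 < b0) (hc : 0 < c0) (hd : 0 < d0)
    (hab : a0 + b0 ≤ 1) (hcd : c0 + d0 ≤ 1)
    (h : a0 / (a0 + b0) > c0 / (c0 + d0))
    (hAl : Al = tan (arctan (c0 / d0) / 4))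
    (hBl : Bl = tan (π / 4 + arctan (a0 / b0) / 2))
    (ha1 : a1 = Al * (a0 - Bl * b0) / (Al - Bl))
    (hb1 : b1 = (a0 - Bl * b0) / (Al - Bl))
    (ha2 : a2 = a0 - a1) (hb2 : b2 = b0 - b1)
    (hCl : Cl = tan (arctan (c0 / d0) / 2))
    (hDl : Dl = tan (3 * π / 8 + arctan (a0 / b0) / 4))
    (hc1 : c1 = Cl * (c0 - Dl * d0) / (Cl - Dl))
    (hd1 : d1 = (c0 - Dl * d0) / (Cl - Dl))
    (hc2 : c2 = c0 - c1) (hd2 : d2 = d0 - d1) :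
    (0 < a1 ∧ 0 < b1 ∧ 0 < a2 ∧ 0 < b2 ∧ 0 < c1 ∧ 0 < d1 ∧ 0 < c2 ∧ 0 < d2) ∧
    a1 + a2 = a0 ∧ b1 + b2 = b0 ∧ c1 + c2 = c0 ∧ d1 + d2 = d0 ∧
    a1 / (a1 + b1) < c1 / (c1 + d1) ∧ a2 / (a2 + b2) < c2 / (c2 + d2) := by
  have hpi : 0 < π := Real.pi_pos
  set α := arctan (a0 / b0) with hαdef
  set γ := arctan (c0 / d0) with hγdef
  have hα0 : 0 < α := by
    have := Real.arctan_strictMono (show (0:ℝ) < a0 / b0 by positivity)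
    rwa [Real.arctan_zero] at this
  have hγ0 : 0 < γ := by
    have := Real.arctan_strictMono (show (0:ℝ) < c0 / d0 by positivity)
    rwa [Real.arctan_zero] at this
  have hα2 : α < π / 2 := Real.arctan_lt_pi_div_two _
  have hγ2 : γ < π / 2 := Real.arctan_lt_pi_div_two _
  have hdiv : c0 / d0 < a0 / b0 := by
    rw [div_lt_div_iff₀ hd hb]
    have h2 := (div_lt_div_iff₀ (by positivity) (by positivity)).1 h
    nlinarith only [h2, ha, hb, hc, hd]
  have hγα : γ < α := Real.arctan_strictMono hdiv
  have tanlt : ∀ x y : ℝ, 0 < x → x < y → y < π / 2 → tan x < tan y := by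
    intro x y hx hxy hy
    exact Real.tan_lt_tan_of_nonneg_of_lt_pi_div_two hx.le hy hxy
  have htanα : tan α = a0 / b0 := Real.tan_arctan _
  have htanγ : tan γ = c0 / d0 := Real.tan_arctan _
  -- Al facts
  have hAl0 : 0 < Al := by
    rw [hAl]; exact Real.tan_pos_of_pos_of_lt_pi_div_two (by linarith) (by linarith)
  have hAlα : Al < a0 / b0 := by
    rw [hAl, ← htanα]; exact tanlt _ _ (by linarith) (by linarith) hα2
  have hαBl : a0 / b0 < Bl := by
    rw [hBl, ← htanα]; exact tanlt _ _ hα0 (by linarith) (by linarith)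
  have hAlBl : Al < Bl := lt_trans hAlα hαBl
  -- Cl, Dl facts
  have hAlCl : Al < Cl := by
    rw [hAl, hCl]; exact tanlt _ _ (by linarith) (by linarith) (by linarith)
  have hCl0 : 0 < Cl := lt_trans hAl0 hAlCl
  have hClγ : Cl < c0 / d0 := by
    rw [hCl, ← htanγ]; exact tanlt _ _ (by linarith) (by linarith) hγ2
  have hγDl : c0 / d0 < Dl := by
    rw [hDl, ← htanγ]; exact tanlt _ _ hγ0 (by linarith) (by linarith)
  have hClDl : Cl < Dl := lt_trans hClγ hγDl
  have hBlDl : Bl < Dl := by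
    rw [hBl, hDl]; exact tanlt _ _ (by linarith) (by linarith) (by linarith)
  -- b1 positivity and structure
  have hnumb : a0 - Bl * b0 < 0 := by
    have := (div_lt_iff₀ hb).1 hαBl; linarith
  have hb1pos : 0 < b1 := by
    rw [hb1]; exact div_pos_of_neg_of_neg hnumb (by linarith)
  have hb1eq : b1 * (Al - Bl) = a0 - Bl * b0 := by
    rw [hb1, div_mul_cancel₀ _ (by linarith : Al - Bl ≠ 0)]
  have ha1eq : a1 = Al * b1 := by
    rw [ha1, hb1, mul_div_assoc]
  have ha1pos : 0 < a1 := by rw [ha1eq]; positivity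
  have hb2pos : 0 < b2 := by
    have hAlb0 : Al * b0 < a0 := (lt_div_iff₀ hb).1 hAlα
    have key : (b0 - b1) * (Bl - Al) = a0 - Al * b0 := by linear_combination hb1eq
    have hkpos : 0 < (b0 - b1) * (Bl - Al) := by rw [key]; linarith only [hAlb0]
    rw [hb2]; nlinarith only [hkpos, hAlBl]
  have ha2eq : a2 = Bl * b2 := by
    rw [ha2, hb2, ha1eq]; linear_combination -hb1eq
  have ha2pos : 0 < a2 := by
    rw [ha2eq]; exact mul_pos (by linarith) hb2pos
  -- d1 positivity and structure
  have hnumd : c0 - Dl * d0 < 0 := by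
    have := (div_lt_iff₀ hd).1 hγDl; linarith
  have hd1pos : 0 < d1 := by
    rw [hd1]; exact div_pos_of_neg_of_neg hnumd (by linarith)
  have hd1eq : d1 * (Cl - Dl) = c0 - Dl * d0 := by
    rw [hd1, div_mul_cancel₀ _ (by linarith : Cl - Dl ≠ 0)]
  have hc1eq : c1 = Cl * d1 := by
    rw [hc1, hd1, mul_div_assoc]
  have hc1pos : 0 < c1 := by rw [hc1eq]; positivity
  have hd2pos : 0 < d2 := by
    have hCld0 : Cl * d0 < c0 := (lt_div_iff₀ hd).1 hClγ
    have key : (d0 - d1) * (Dl - Cl) = c0 - Cl * d0 := by linear_combination hd1eq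
    have hkpos : 0 < (d0 - d1) * (Dl - Cl) := by rw [key]; linarith only [hCld0]
    rw [hd2]; nlinarith only [hkpos, hClDl]
  have hc2eq : c2 = Dl * d2 := by
    rw [hc2, hd2, hc1eq]; linear_combination -hd1eq
  have hc2pos : 0 < c2 := by
    rw [hc2eq]; exact mul_pos (by linarith) hd2pos
  refine ⟨⟨ha1pos, hb1pos, ha2pos, hb2pos, hc1pos, hd1pos, hc2pos, hd2pos⟩,
    by rw [ha2]; ring, by rw [hb2]; ring, by rw [hc2]; ring, by rw [hd2]; ring, ?_, ?_⟩
  · rw [ha1eq, hc1eq, div_lt_div_iff₀ (by linarith) (by linarith)]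
    nlinarith only [mul_pos (sub_pos.2 hAlCl) (mul_pos hb1pos hd1pos), hAl0, hCl0, hb1pos, hd1pos]
  · rw [ha2eq, hc2eq, div_lt_div_iff₀ (by linarith) (by linarith)]
    nlinarith only [mul_pos (sub_pos.2 hBlDl) (mul_pos hb2pos hd2pos), hb2pos, hd2pos]
end

section
/- Let a0, b0, c0, d0 be positive real numbers with a0 + b0 ≤ 1, c0 + d0 ≤ 1, and a0/(a0+b0) < c0/(c0+d0). Define A_s = tan(arctan(a0/b0)/2), B_s = tan(3π/8 + arctan(c0/d0)/4), a1 = A_s·(a0 − B_s·b0)/(A_s − B_s), b1 = (a0 − B_s·b0)/(A_s − B_s), a2 = a0 − a1, b2 = b0 − b1, and C_s = tan(arctan(a0/b0)/4), D_s = tan(π/4 + arctan(c0/d0)/2), c1 = C_s·(c0 − D_s·d0)/(C_s − D_s), d1 = (c0 − D_s·d0)/(C_s − D_s), c2 = c0 − c1, d2 = d0 − d1. Then a1, b1, a2, b2, c1, d1, c2, d2 are all positive, a1 + a2 = a0, b1 + b2 = b0, c1 + c2 = c0, d1 + d2 = d0, and a1/(a1+b1) > c1/(c1+d1) and a2/(a2+b2)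 > c2/(c2+d2). -/
open Real

set_option maxHeartbeats 1000000 in
/-- Proposition 1, part ii: the explicit numerical construction of Simpson's
Paradox from aggregate values with `a0/(a0+b0) < c0/(c0+d0)`. -/
theorem simpson_numerical_lt
    (a0 b0 c0 d0 As Bs Cs Ds a1 b1 a2 b2 c1 d1 c2 d2 : ℝ)
    (ha : 0 < a0) (hb : 0 < b0) (hc : 0 < c0) (hd : 0 < d0)
    (hab : a0 + b0 ≤ 1) (hcd : c0 + d0 ≤ 1)
    (h : a0 / (a0 + b0) < c0 / (c0 + d0))
    (hAs : As = tan (arctan (a0 / b0) / 2))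
    (hBs : Bs = tan (3 * π / 8 + arctan (c0 / d0) / 4))
    (ha1 : a1 = As * (a0 - Bs * b0) / (As - Bs))
    (hb1 : b1 = (a0 - Bs * b0) / (As - Bs))
    (ha2 : a2 = a0 - a1) (hb2 : b2 = b0 - b1)
    (hCs : Cs = tan (arctan (a0 / b0) / 4))
    (hDs : Ds = tan (π / 4 + arctan (c0 / d0) / 2))
    (hc1 : c1 = Cs * (c0 - Ds * d0) / (Cs - Ds))
    (hd1 : d1 = (c0 - Ds * d0) / (Cs - Ds))
    (hc2 : c2 = c0 - c1) (hd2 : d2 = d0 - d1) :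
    (0 < a1 ∧ 0 < b1 ∧ 0 < a2 ∧ 0 < b2 ∧ 0 < c1 ∧ 0 < d1 ∧ 0 < c2 ∧ 0 < d2) ∧
    a1 + a2 = a0 ∧ b1 + b2 = b0 ∧ c1 + c2 = c0 ∧ d1 + d2 = d0 ∧
    a1 / (a1 + b1) > c1 / (c1 + d1) ∧ a2 / (a2 + b2) > c2 / (c2 + d2) := by
  have hπ := Real.pi_pos
  set α := arctan (a0 / b0) with hαdef
  set γ := arctan (c0 / d0) with hγdef
  have hα0 : 0 < α := by
    have := arctan_strictMono (div_pos ha hb)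
    rwa [arctan_zero] at this
  have hα2 : α < π / 2 := arctan_lt_pi_div_two _
  have hγ0 : 0 < γ := by
    have := arctan_strictMono (div_pos hc hd)
    rwa [arctan_zero] at this
  have hγ2 : γ < π / 2 := arctan_lt_pi_div_two _
  have htd : a0 / b0 < c0 / d0 := by
    rw [div_lt_div_iff₀ hb hd]
    have := (div_lt_div_iff₀ (by linarith) (by linarith)).mp h
    nlinarith
  have hαγ : α < γ := arctan_strictMono htd
  have hta : tan α = a0 / b0 := tan_arctan _
  have htc : tan γ = c0 / d0 := tan_arctan _
  -- key tan inequalities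
  have hAs0 : 0 < As := by
    rw [hAs]; exact tan_pos_of_pos_of_lt_pi_div_two (by linarith) (by linarith)
  have hCs0 : 0 < Cs := by
    rw [hCs]; exact tan_pos_of_pos_of_lt_pi_div_two (by linarith) (by linarith)
  have hAst : As < a0 / b0 := by
    rw [hAs, ← hta]
    exact tan_lt_tan_of_nonneg_of_lt_pi_div_two (by linarith) hα2 (by linarith)
  have htBs : a0 / b0 < Bs := by
    rw [hBs, ← hta]
    exact tan_lt_tan_of_nonneg_of_lt_pi_div_two (by linarith) (by linarith) (by linarith)
  have hCsAs : Cs < As := by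
    rw [hAs, hCs]
    exact tan_lt_tan_of_nonneg_of_lt_pi_div_two (by linarith) (by linarith) (by linarith)
  have hCsu : Cs < c0 / d0 := by
    rw [hCs, ← htc]
    exact tan_lt_tan_of_nonneg_of_lt_pi_div_two (by linarith) hγ2 (by linarith)
  have huDs : c0 / d0 < Ds := by
    rw [hDs, ← htc]
    exact tan_lt_tan_of_nonneg_of_lt_pi_div_two (by linarith) (by linarith) (by linarith)
  have hDsBs : Ds < Bs := by
    rw [hDs, hBs]
    exact tan_lt_tan_of_nonneg_of_lt_pi_div_two (by linarith) (by linarith) (by linarith)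
  have hDs0 : 0 < Ds := lt_trans (div_pos hc hd) huDs
  -- algebra: (a,b) side
  have hABne : As - Bs < 0 := by linarith
  have hnum : a0 - Bs * b0 < 0 := by
    have := (div_lt_iff₀ hb).mp htBs; linarith
  have hb1pos : 0 < b1 := by
    rw [hb1]; exact div_pos_of_neg_of_neg hnum hABne
  have ha1eq : a1 = As * b1 := by rw [ha1, hb1, mul_div_assoc]
  have ha1pos : 0 < a1 := by rw [ha1eq]; positivity
  have hb2pos : 0 < b2 := by
    rw [hb2, sub_pos, hb1, div_lt_iff_of_neg hABne]
    have := (lt_div_iff₀ hb).mp hAst; linarith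
  have ha2eq : a2 = Bs * b2 := by
    have hne : As - Bs ≠ 0 := ne_of_lt hABne
    rw [ha2, hb2, ha1, hb1]
    field_simp
    ring
  have ha2pos : 0 < a2 := by
    rw [ha2eq]; exact mul_pos (by linarith [div_pos ha hb]) hb2pos
  -- algebra: (c,d) side
  have hCDne : Cs - Ds < 0 := by linarith [lt_trans hCsu huDs]
  have hnum2 : c0 - Ds * d0 < 0 := by
    have := (div_lt_iff₀ hd).mp huDs; linarith
  have hd1pos : 0 < d1 := by
    rw [hd1]; exact div_pos_of_neg_of_neg hnum2 hCDne
  have hc1eq : c1 = Cs * d1 := by rw [hc1, hd1, mul_div_assoc]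
  have hc1pos : 0 < c1 := by rw [hc1eq]; positivity
  have hd2pos : 0 < d2 := by
    rw [hd2, sub_pos, hd1, div_lt_iff_of_neg hCDne]
    have := (lt_div_iff₀ hd).mp hCsu; linarith
  have hc2eq : c2 = Ds * d2 := by
    have hne : Cs - Ds ≠ 0 := ne_of_lt hCDne
    rw [hc2, hd2, hc1, hd1]
    field_simp
    ring
  have hc2pos : 0 < c2 := by rw [hc2eq]; exact mul_pos hDs0 hd2pos
  refine ⟨⟨ha1pos, hb1pos, ha2pos, hb2pos, hc1pos, hd1pos, hc2pos, hd2pos⟩,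
    by rw [ha2]; ring, by rw [hb2]; ring, by rw [hc2]; ring, by rw [hd2]; ring, ?_, ?_⟩
  · rw [gt_iff_lt, div_lt_div_iff₀ (by linarith) (by linarith), ha1eq, hc1eq]
    linarith [mul_pos (mul_pos hb1pos hd1pos) (sub_pos.mpr hCsAs)]
  · rw [gt_iff_lt, div_lt_div_iff₀ (by positivity) (by positivity), ha2eq, hc2eq]
    linarith [mul_pos (mul_pos hb2pos hd2pos) (sub_pos.mpr hDsBs)]
end

section
/- Let a0 and c0 be real numbers with 0 < c0 < a0 < 1. Then there exists a probability mass function μ on Bool × Bool × Bool (with coordinates interpreted as (X, A, B1)) such that: each of the events {A = 1} and {A = 0} has positive μ-probability, each of the four events {A = a, B1 = b} for a, b ∈ {0, 1} has positive μ-probability, the conditional probabilities satisfy P(X = 1 | A = 1) = a0 and P(X = 1 | A = 0) = c0, and for each b ∈ {0, 1} one has P(X = 1 | A = 1, B1 = b) < P(X = 1 | A = 0, B1 = b). -/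
/-!
With cell weights `w a b` for `(A, B1)` and success rates `r a b` of `X` in each cell,
`P(X = 1 | A = a, B1 = b) = r a b`, while `P(X = 1 | A = a)` is the `w`-weighted average of
`r a ·`. The reversal comes from placing `A = 1` mostly in the favourable stratum `B1 = 1`:
within `A = 1` the strata get weights `(1 + a0)/2, (1 - a0)/2` and rates `2 a0/(1 + a0), 0`;
within `A = 0` they get weights `c0/2, 1 - c0/2` and rates `1, c0/(2 - c0)`. Stratum by stratum
`A = 1` does worse, yet the averages are `a0` and `c0`.
-/

open Finset

/-- The probability of an event `E` under a probability mass function `μ` on a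
finite type. -/
def prob {Ω : Type*} [Fintype Ω] (μ : Ω → ℝ) (E : Ω → Prop) [DecidablePred E] : ℝ :=
  ∑ ω, if E ω then μ ω else 0

/-- The conditional probability `P(E | F) = P(E ∩ F) / P(F)` under a probability
mass function `μ` on a finite type. -/
noncomputable def condProb {Ω : Type*} [Fintype Ω] (μ : Ω → ℝ) (E F : Ω → Prop)
    [DecidablePred E] [DecidablePred F] : ℝ :=
  prob μ (fun ω => E ω ∧ F ω) / prob μ F

def stratifiedPMF {α β : Type*} (w r : α → β → ℝ) : Bool × α × β → ℝ
  | (x, a, b) => w a b * if x then r a b else 1 - r a b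

section Stratified

variable {α β : Type*} (w r : α → β → ℝ)

theorem stratifiedPMF_nonneg (hw : ∀ a b, 0 ≤ w a b) (hr : ∀ a b, r a b ∈ Set.Icc 0 1)
    (p : Bool × α × β) : 0 ≤ stratifiedPMF w r p := by
  obtain ⟨x, a, b⟩ := p
  refine mul_nonneg (hw a b) ?_
  cases x <;> simp [(hr a b).1, (hr a b).2]

theorem stratifiedPMF_true_add_false (a : α) (b : β) :
    stratifiedPMF w r (true, a, b) + stratifiedPMF w r (false, a, b) = w a b := by
  simp [stratifiedPMF, ← mul_add]

theorem sum_stratifiedPMF [Fintype α] [Fintype β] :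
    ∑ p, stratifiedPMF w r p = ∑ a, ∑ b, w a b := by
  simp [Fintype.sum_prod_type, ← sum_add_distrib, stratifiedPMF_true_add_false]

variable [Fintype α] [Fintype β]

theorem prob_stratifiedPMF_cell [DecidableEq α] [DecidableEq β] (a : α) (b : β) :
    prob (stratifiedPMF w r) (fun p => p.2.1 = a ∧ p.2.2 = b) = w a b := by
  simp [prob, Fintype.sum_prod_type, ite_and, stratifiedPMF_true_add_false]

theorem prob_stratifiedPMF_success_cell [DecidableEq α] [DecidableEq β] (a : α) (b : β) :
    prob (stratifiedPMF w r) (fun p => p.1 = true ∧ p.2.1 = a ∧ p.2.2 = b) = w a b * r a b := by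
  simp [prob, Fintype.sum_prod_type, stratifiedPMF, ite_and]

theorem prob_stratifiedPMF_stratum [DecidableEq α] (a : α) :
    prob (stratifiedPMF w r) (fun p => p.2.1 = a) = ∑ b, w a b := by
  simp [prob, Fintype.sum_prod_type, ite_add_ite, ← sum_add_distrib,
    stratifiedPMF_true_add_false]

theorem prob_stratifiedPMF_success_stratum [DecidableEq α] (a : α) :
    prob (stratifiedPMF w r) (fun p => p.1 = true ∧ p.2.1 = a) = ∑ b, w a b * r a b := by
  simp [prob, Fintype.sum_prod_type, stratifiedPMF]

theorem condProb_stratifiedPMF_cell [DecidableEq α] [DecidableEq β] {a : α} {b : β}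
    (hw : w a b ≠ 0) :
    condProb (stratifiedPMF w r) (fun p => p.1 = true) (fun p => p.2.1 = a ∧ p.2.2 = b) =
      r a b := by
  rw [condProb, prob_stratifiedPMF_success_cell, prob_stratifiedPMF_cell,
    mul_div_cancel_left₀ _ hw]

theorem condProb_stratifiedPMF_stratum [DecidableEq α] (a : α) :
    condProb (stratifiedPMF w r) (fun p => p.1 = true) (fun p => p.2.1 = a) =
      (∑ b, w a b * r a b) / ∑ b, w a b := by
  rw [condProb, prob_stratifiedPMF_success_stratum, prob_stratifiedPMF_stratum]

end Stratified

noncomputable def simpsonWeight (a₀ c₀ : ℝ) : Bool → Bool → ℝ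
  | true, true => (1 + a₀) / 4
  | true, false => (1 - a₀) / 4
  | false, true => c₀ / 4
  | false, false => (2 - c₀) / 4

noncomputable def simpsonRate (a₀ c₀ : ℝ) : Bool → Bool → ℝ
  | true, true => 2 * a₀ / (1 + a₀)
  | true, false => 0
  | false, true => 1
  | false, false => c₀ / (2 - c₀)

section SimpsonInstance

variable {a₀ c₀ : ℝ}

theorem sum_simpsonWeight : ∑ a, ∑ b, simpsonWeight a₀ c₀ a b = 1 := by
  simp only [Fintype.sum_bool, simpsonWeight]
  ring

theorem simpsonWeight_pos (ha₀ : -1 < a₀) (ha₁ : a₀ < 1) (hc₀ : 0 < c₀) (hc₁ : c₀ < 2)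
    (a b : Bool) : 0 < simpsonWeight a₀ c₀ a b := by
  cases a <;> cases b <;> simp only [simpsonWeight] <;> linarith

theorem simpsonRate_mem_Icc (ha₀ : 0 ≤ a₀) (ha₁ : a₀ ≤ 1) (hc₀ : 0 ≤ c₀) (hc₁ : c₀ ≤ 1)
    (a b : Bool) : simpsonRate a₀ c₀ a b ∈ Set.Icc 0 1 := by
  cases a <;> cases b <;> simp only [simpsonRate, Set.mem_Icc]
  · exact ⟨div_nonneg hc₀ (by linarith), (div_le_one (by linarith)).2 (by linarith)⟩
  · norm_num
  · norm_num
  · exact ⟨div_nonneg (by linarith) (by linarith), (div_le_one (by linarith)).2 (by linarith)⟩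

theorem simpsonRate_true_lt_false (ha₀ : -1 < a₀) (ha₁ : a₀ < 1) (hc₀ : 0 < c₀)
    (hc₁ : c₀ < 2) (b : Bool) : simpsonRate a₀ c₀ true b < simpsonRate a₀ c₀ false b := by
  cases b <;> simp only [simpsonRate]
  · exact div_pos hc₀ (by linarith)
  · exact (div_lt_one (by linarith)).2 (by linarith)

theorem simpsonRate_average_true (ha : a₀ ≠ -1) :
    (∑ b, simpsonWeight a₀ c₀ true b * simpsonRate a₀ c₀ true b) /
      ∑ b, simpsonWeight a₀ c₀ true b = a₀ := by
  have : 1 + a₀ ≠ 0 := fun h => ha (by linarith)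
  simp only [Fintype.sum_bool, simpsonWeight, simpsonRate]
  field_simp
  ring

theorem simpsonRate_average_false (hc : c₀ ≠ 2) :
    (∑ b, simpsonWeight a₀ c₀ false b * simpsonRate a₀ c₀ false b) /
      ∑ b, simpsonWeight a₀ c₀ false b = c₀ := by
  have : 2 - c₀ ≠ 0 := sub_ne_zero.2 (Ne.symm hc)
  simp only [Fintype.sum_bool, simpsonWeight, simpsonRate]
  field_simp
  ring

end SimpsonInstance

/-- Existence of the classic Simpson's Paradox as a probability distribution on
`(X, A, B1)` with prescribed aggregate success rates `P(X=1|A=1) = a0` and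
`P(X=1|A=0) = c0` with `c0 < a0`, where the inequality reverses conditionally
on each level of `B1`. -/
theorem simpson_paradox_pmf (a0 c0 : ℝ) (hc : 0 < c0) (hca : c0 < a0) (ha : a0 < 1) :
    ∃ μ : Bool × Bool × Bool → ℝ,
      (∀ p, 0 ≤ μ p) ∧ (∑ p, μ p = 1) ∧
      (∀ a : Bool, 0 < prob μ (fun p => p.2.1 = a)) ∧
      (∀ a b : Bool, 0 < prob μ (fun p => p.2.1 = a ∧ p.2.2 = b)) ∧
      condProb μ (fun p => p.1 = true) (fun p => p.2.1 = true) = a0 ∧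
      condProb μ (fun p => p.1 = true) (fun p => p.2.1 = false) = c0 ∧
      (∀ b : Bool,
        condProb μ (fun p => p.1 = true) (fun p => p.2.1 = true ∧ p.2.2 = b) <
        condProb μ (fun p => p.1 = true) (fun p => p.2.1 = false ∧ p.2.2 = b)) := by
  have ha0 : 0 ≤ a0 := (hc.trans hca).le
  have hc1 : c0 < 1 := hca.trans ha
  have hw := simpsonWeight_pos (by linarith) ha hc (by linarith)
  refine ⟨stratifiedPMF (simpsonWeight a0 c0) (simpsonRate a0 c0),
    stratifiedPMF_nonneg _ _ (fun a b => (hw a b).le)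
      (simpsonRate_mem_Icc ha0 ha.le hc.le hc1.le), ?_, fun a => ?_, fun a b => ?_, ?_, ?_,
    fun b => ?_⟩
  · rw [sum_stratifiedPMF, sum_simpsonWeight]
  · rw [prob_stratifiedPMF_stratum]
    exact sum_pos (fun b _ => hw a b) univ_nonempty
  · rw [prob_stratifiedPMF_cell]
    exact hw a b
  · rw [condProb_stratifiedPMF_stratum, simpsonRate_average_true (by linarith)]
  · rw [condProb_stratifiedPMF_stratum, simpsonRate_average_false (by linarith)]
  · rw [condProb_stratifiedPMF_cell _ _ (hw true b).ne',
      condProb_stratifiedPMF_cell _ _ (hw false b).ne']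
    exact simpsonRate_true_lt_false (by linarith) ha hc (by linarith) b
end

section
/- Let n be a natural number and let a, b, c, d be positive real numbers with a/(a+b) > c/(c+d). Then there exist functions α, β, γ, δ assigning a positive real number to every binary string s of length m for each 0 ≤ m ≤ n, such that: α, β, γ, δ at the empty string equal a, b, c, d respectively; for every string s of length m < n, α(s) = α(s⌢0) + α(s⌢1), and likewise for β, γ, δ; and for every string s of length m ≤ n, α(s)/(α(s)+β(s)) > γ(s)/(γ(s)+δ(s)) if m is even, while α(s)/(α(s)+β(s)) < γ(s)/(γ(s)+δ(s)) if m is odd. -/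
/-- One-step split of a quadruple of masses, reversing the product inequality. -/
noncomputable def simpsonSplit (p : ℝ × ℝ × ℝ × ℝ) (t : Bool) : ℝ × ℝ × ℝ × ℝ :=
  if p.2.1 * p.2.2.1 < p.1 * p.2.2.2 then
    (let ε := p.2.1 * p.2.2.1 / (p.2.1 * p.2.2.1 + 4 * (p.1 * p.2.2.2));
     match t with
     | true => ((1 - ε) * p.1, p.2.1 / 2, p.2.2.1 / 2, ε * p.2.2.2)
     | false => (ε * p.1, p.2.1 / 2, p.2.2.1 / 2, (1 - ε) * p.2.2.2))
  else
    (let ε := p.1 * p.2.2.2 / (p.1 * p.2.2.2 + 4 * (p.2.1 * p.2.2.1));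
     match t with
     | true => (p.1 / 2, (1 - ε) * p.2.1, ε * p.2.2.1, p.2.2.2 / 2)
     | false => (p.1 / 2, ε * p.2.1, (1 - ε) * p.2.2.1, p.2.2.2 / 2))

def simpsonPos (p : ℝ × ℝ × ℝ × ℝ) : Prop :=
  0 < p.1 ∧ 0 < p.2.1 ∧ 0 < p.2.2.1 ∧ 0 < p.2.2.2

lemma simpsonSplit_sum (p : ℝ × ℝ × ℝ × ℝ) :
    (simpsonSplit p false).1 + (simpsonSplit p true).1 = p.1 ∧
    (simpsonSplit p false).2.1 + (simpsonSplit p true).2.1 = p.2.1 ∧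
    (simpsonSplit p false).2.2.1 + (simpsonSplit p true).2.2.1 = p.2.2.1 ∧
    (simpsonSplit p false).2.2.2 + (simpsonSplit p true).2.2.2 = p.2.2.2 := by
  unfold simpsonSplit
  split_ifs <;> exact ⟨by ring, by ring, by ring, by ring⟩

lemma simpsonSplit_gt (p : ℝ × ℝ × ℝ × ℝ) (hp : simpsonPos p)
    (hgt : p.2.1 * p.2.2.1 < p.1 * p.2.2.2) (t : Bool) :
    simpsonPos (simpsonSplit p t) ∧
    (simpsonSplit p t).1 * (simpsonSplit p t).2.2.2 <
      (simpsonSplit p t).2.1 * (simpsonSplit p t).2.2.1 := by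
  obtain ⟨p1, p2, p3, p4⟩ := p
  obtain ⟨h1, h2, h3, h4⟩ := hp
  simp only [simpsonPos, simpsonSplit] at *
  rw [if_pos hgt]
  set ε := p2 * p3 / (p2 * p3 + 4 * (p1 * p4)) with hε
  have hbc : 0 < p2 * p3 := mul_pos h2 h3
  have had : 0 < p1 * p4 := mul_pos h1 h4
  have hE : 0 < p2 * p3 + 4 * (p1 * p4) := by linarith
  have hε0 : 0 < ε := div_pos hbc hE
  have hε1 : ε < 1 := by rw [hε, div_lt_one hE]; linarith
  have hεE : ε * (p2 * p3 + 4 * (p1 * p4)) = p2 * p3 := div_mul_cancel₀ _ (ne_of_gt hE)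
  have h1ε : 0 < 1 - ε := by linarith
  cases t <;> dsimp only <;>
    refine ⟨⟨?_, ?_, ?_, ?_⟩, ?_⟩
  · exact mul_pos hε0 h1
  · exact half_pos h2
  · exact half_pos h3
  · exact mul_pos h1ε h4
  · nlinarith [mul_pos hε0 had, mul_pos hε0 (mul_pos hε0 had), mul_pos hε0 hbc]
  · exact mul_pos h1ε h1
  · exact half_pos h2
  · exact half_pos h3
  · exact mul_pos hε0 h4
  · nlinarith [mul_pos hε0 had, mul_pos hε0 (mul_pos hε0 had), mul_pos hε0 hbc]

lemma simpsonSplit_lt (p : ℝ × ℝ × ℝ × ℝ) (hp : simpsonPos p)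
    (hlt : p.1 * p.2.2.2 < p.2.1 * p.2.2.1) (t : Bool) :
    simpsonPos (simpsonSplit p t) ∧
    (simpsonSplit p t).2.1 * (simpsonSplit p t).2.2.1 <
      (simpsonSplit p t).1 * (simpsonSplit p t).2.2.2 := by
  obtain ⟨p1, p2, p3, p4⟩ := p
  obtain ⟨h1, h2, h3, h4⟩ := hp
  simp only [simpsonPos, simpsonSplit] at *
  rw [if_neg (by linarith)]
  set ε := p1 * p4 / (p1 * p4 + 4 * (p2 * p3)) with hε
  have hbc : 0 < p2 * p3 := mul_pos h2 h3
  have had : 0 < p1 * p4 := mul_pos h1 h4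
  have hE : 0 < p1 * p4 + 4 * (p2 * p3) := by linarith
  have hε0 : 0 < ε := div_pos had hE
  have hε1 : ε < 1 := by rw [hε, div_lt_one hE]; linarith
  have hεE : ε * (p1 * p4 + 4 * (p2 * p3)) = p1 * p4 := div_mul_cancel₀ _ (ne_of_gt hE)
  have h1ε : 0 < 1 - ε := by linarith
  cases t <;> dsimp only <;>
    refine ⟨⟨?_, ?_, ?_, ?_⟩, ?_⟩
  · exact half_pos h1
  · exact mul_pos hε0 h2
  · exact mul_pos h1ε h3
  · exact half_pos h4
  · nlinarith [mul_pos hε0 hbc, mul_pos hε0 (mul_pos hε0 hbc), mul_pos hε0 had]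
  · exact half_pos h1
  · exact mul_pos h1ε h2
  · exact mul_pos hε0 h3
  · exact half_pos h4
  · nlinarith [mul_pos hε0 hbc, mul_pos hε0 (mul_pos hε0 hbc), mul_pos hε0 had]

noncomputable def simpsonTree (a b c d : ℝ) : (m : ℕ) → (Fin m → Bool) → ℝ × ℝ × ℝ × ℝ
  | 0, _ => (a, b, c, d)
  | m + 1, s => simpsonSplit (simpsonTree a b c d m (Fin.init s)) (s (Fin.last m))

lemma simpsonTree_snoc (a b c d : ℝ) (m : ℕ) (s : Fin m → Bool) (t : Bool) :
    simpsonTree a b c d (m + 1) (Fin.snoc s t) = simpsonSplit (simpsonTree a b c d m s) t := by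
  simp [simpsonTree, Fin.init_snoc, Fin.snoc_last]

lemma simpsonTree_inv (a b c d : ℝ) (ha : 0 < a) (hb : 0 < b) (hc : 0 < c) (hd : 0 < d)
    (h : c * b < a * d) (m : ℕ) (s : Fin m → Bool) :
    simpsonPos (simpsonTree a b c d m s) ∧
    (Even m → (simpsonTree a b c d m s).2.1 * (simpsonTree a b c d m s).2.2.1 <
      (simpsonTree a b c d m s).1 * (simpsonTree a b c d m s).2.2.2) ∧
    (Odd m → (simpsonTree a b c d m s).1 * (simpsonTree a b c d m s).2.2.2 <
      (simpsonTree a b c d m s).2.1 * (simpsonTree a b c d m s).2.2.1) := by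
  induction m with
  | zero =>
    refine ⟨⟨ha, hb, hc, hd⟩, fun _ => by simpa [simpsonTree, mul_comm] using h,
      fun h' => absurd h' (by simp)⟩
  | succ m ih =>
    have hs : simpsonTree a b c d (m + 1) s
        = simpsonSplit (simpsonTree a b c d m (Fin.init s)) (s (Fin.last m)) := rfl
    obtain ⟨hpos, heven, hodd⟩ := ih (Fin.init s)
    rcases Nat.even_or_odd m with he | ho
    · have := simpsonSplit_gt _ hpos (heven he) (s (Fin.last m))
      rw [hs]
      exact ⟨this.1, fun h' => absurd he (Nat.even_add_one.mp h'), fun _ => this.2⟩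
    · have := simpsonSplit_lt _ hpos (hodd ho) (s (Fin.last m))
      rw [hs]
      refine ⟨this.1, fun _ => this.2, fun h' => ?_⟩
      exact absurd (Nat.even_add_one.mpr (Nat.not_even_iff_odd.mpr ho)) (Nat.not_even_iff_odd.mpr h')

/-- The combinatorial core of the `n`-factor Simpson's Paradox: a binary tree of
depth `n` of positive masses, additive along the tree, rooted at `a, b, c, d`
with `a/(a+b) > c/(c+d)`, in which the direction of the inequality between the
two success proportions reverses at every level. -/
theorem nFactor_simpson_tree
    (n : ℕ) (a b c d : ℝ) (ha : 0 < a) (hb : 0 < b) (hc : 0 < c) (hd : 0 < d)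
    (h : a / (a + b) > c / (c + d)) :
    ∃ α β γ δ : (m : ℕ) → (Fin m → Bool) → ℝ,
      α 0 Fin.elim0 = a ∧ β 0 Fin.elim0 = b ∧ γ 0 Fin.elim0 = c ∧ δ 0 Fin.elim0 = d ∧
      (∀ m, m ≤ n → ∀ s : Fin m → Bool,
        0 < α m s ∧ 0 < β m s ∧ 0 < γ m s ∧ 0 < δ m s) ∧
      (∀ m, m < n → ∀ s : Fin m → Bool,
        α m s = α (m + 1) (Fin.snoc s false) + α (m + 1) (Fin.snoc s true) ∧
        β m s = β (m + 1) (Fin.snoc s false) + β (m + 1) (Fin.snoc s true) ∧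
        γ m s = γ (m + 1) (Fin.snoc s false) + γ (m + 1) (Fin.snoc s true) ∧
        δ m s = δ (m + 1) (Fin.snoc s false) + δ (m + 1) (Fin.snoc s true)) ∧
      (∀ m, m ≤ n → ∀ s : Fin m → Bool,
        (Even m → α m s / (α m s + β m s) > γ m s / (γ m s + δ m s)) ∧
        (Odd m → α m s / (α m s + β m s) < γ m s / (γ m s + δ m s))) := by
  have hcb : c * b < a * d := by
    rw [gt_iff_lt, div_lt_div_iff₀ (by linarith) (by linarith)] at h
    nlinarith
  refine ⟨fun m s => (simpsonTree a b c d m s).1, fun m s => (simpsonTree a b c d m s).2.1,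
    fun m s => (simpsonTree a b c d m s).2.2.1, fun m s => (simpsonTree a b c d m s).2.2.2,
    rfl, rfl, rfl, rfl, ?_, ?_, ?_⟩
  · intro m _ s
    exact (simpsonTree_inv a b c d ha hb hc hd hcb m s).1
  · intro m _ s
    obtain ⟨s1, s2, s3, s4⟩ := simpsonSplit_sum (simpsonTree a b c d m s)
    simp only [simpsonTree_snoc]
    exact ⟨s1.symm, s2.symm, s3.symm, s4.symm⟩
  · intro m _ s
    obtain ⟨⟨h1, h2, h3, h4⟩, heven, hodd⟩ := simpsonTree_inv a b c d ha hb hc hd hcb m s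
    constructor
    · intro hm
      have := heven hm
      rw [gt_iff_lt, div_lt_div_iff₀ (by linarith) (by linarith)]
      nlinarith
    · intro hm
      have := hodd hm
      rw [div_lt_div_iff₀ (by linarith) (by linarith)]
      nlinarith
end

section
/- For every positive integer n there exists a probability mass function μ on Bool × Bool × (Fin n → Bool) (with coordinates interpreted as (X, A, (B1, ..., Bn))) such that for every m with 0 ≤ m ≤ n and every s : Fin m → Bool: the events E(1, s) = {A = 1 and Bi = s(i) for all i < m} and E(0, s) = {A = 0 and Bi = s(i) for all i < m} both have positive μ-probability, and P(X = 1 | E(1, s)) > P(X = 1 | E(0, s)) if m is even, while P(X = 1 | E(1, s)) < P(X = 1 | E(0, s)) if m is odd. -/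
open Finset

/-- For the sample space `(X, A, (B1, ..., Bn))`, the event
`{A = a and Bi = s i for all i < m}` determined by a level `a` of the factor of
interest and a binary string `s` of length `m ≤ n` of levels of the first `m`
additional factors. -/
def event (n m : ℕ) (hm : m ≤ n) (a : Bool) (s : Fin m → Bool) :
    Bool × Bool × (Fin n → Bool) → Prop :=
  fun p => p.2.1 = a ∧ ∀ i : Fin m, p.2.2 (Fin.castLE hm i) = s i

instance (n m : ℕ) (hm : m ≤ n) (a : Bool) (s : Fin m → Bool) :
    DecidablePred (event n m hm a s) := by
  unfold event; infer_instance

namespace SimpsonAux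

noncomputable def qB (a : Bool) (i : ℕ) : ℝ :=
  if (i % 2 = 0 ↔ a = true) then 8/15 else 14/15

noncomputable def pB (a : Bool) (i : ℕ) (b : Bool) : ℝ :=
  if b then qB a i else 1 - qB a i

noncomputable def Mf (a : Bool) (i : ℕ) : ℝ :=
  if (i % 2 = 0 ↔ a = true) then 1/2 else 1/8

noncomputable def df (n : ℕ) (a : Bool) : ℝ :=
  if (n % 2 = 0 ↔ a = true) then 1/2 else 1/4

noncomputable def psi (b : Bool) : ℝ := if b then 1/16 else 1

lemma pB_pos (a : Bool) (i : ℕ) (b : Bool) : 0 < pB a i b := by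
  unfold pB qB; split_ifs <;> norm_num

lemma pB_sum (a : Bool) (i : ℕ) : pB a i false + pB a i true = 1 := by
  unfold pB; simp

lemma pB_psi_sum (a : Bool) (i : ℕ) :
    pB a i false * psi false + pB a i true * psi true = Mf a i := by
  unfold pB qB psi Mf; split_ifs <;> simp_all <;> norm_num

lemma Mf_pos (a : Bool) (i : ℕ) : 0 < Mf a i := by
  unfold Mf; split_ifs <;> norm_num

lemma psi_pos (b : Bool) : 0 < psi b := by unfold psi; split_ifs <;> norm_num

lemma psi_le_one (b : Bool) : psi b ≤ 1 := by unfold psi; split_ifs <;> norm_num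

lemma df_pos (n : ℕ) (a : Bool) : 0 < df n a := by unfold df; split_ifs <;> norm_num

lemma df_le (n : ℕ) (a : Bool) : df n a ≤ 1/2 := by unfold df; split_ifs <;> norm_num

lemma key (n : ℕ) : ∀ k m, m + k = n →
    (m % 2 = 0 → df n true * ∏ i ∈ Ico m n, Mf true i
      = 2 * (df n false * ∏ i ∈ Ico m n, Mf false i)) ∧
    (m % 2 = 1 → df n false * ∏ i ∈ Ico m n, Mf false i
      = 2 * (df n true * ∏ i ∈ Ico m n, Mf true i)) := by
  intro k
  induction k with
  | zero =>
    intro m hm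
    subst hm
    simp only [Nat.add_zero, Ico_self, prod_empty, mul_one]
    unfold df
    constructor
    · intro h; simp [h]; norm_num
    · intro h
      have h0 : ¬ (m % 2 = 0) := by omega
      simp [h0]; norm_num
  | succ k ih =>
    intro m hm
    have hmn : m < n := by omega
    have ih' := ih (m + 1) (by omega)
    rw [Finset.prod_eq_prod_Ico_succ_bot hmn, Finset.prod_eq_prod_Ico_succ_bot hmn]
    constructor
    · intro h
      have h1 : (m + 1) % 2 = 1 := by omega
      have := ih'.2 h1
      have hMt : Mf true m = 1/2 := by unfold Mf; simp [h]
      have hMf : Mf false m = 1/8 := by unfold Mf; simp [h]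
      rw [hMt, hMf]
      nlinarith [this]
    · intro h
      have h1 : (m + 1) % 2 = 0 := by omega
      have := ih'.1 h1
      have hMt : Mf true m = 1/8 := by
        unfold Mf; simp [show ¬ (m % 2 = 0) by omega]
      have hMf : Mf false m = 1/2 := by
        unfold Mf; simp [show ¬ (m % 2 = 0) by omega]
      rw [hMt, hMf]
      nlinarith [this]

/-- The distribution. -/
noncomputable def μn (n : ℕ) : Bool × Bool × (Fin n → Bool) → ℝ := fun p =>
  (1/2) * (∏ i : Fin n, pB p.2.1 (i : ℕ) (p.2.2 i)) *
    (if p.1 = true then 1/2 + df n p.2.1 * ∏ i : Fin n, psi (p.2.2 i)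
     else 1/2 - df n p.2.1 * ∏ i : Fin n, psi (p.2.2 i))

lemma prod_psi_le_one {n : ℕ} (b : Fin n → Bool) :
    (0 < ∏ i : Fin n, psi (b i)) ∧ (∏ i : Fin n, psi (b i)) ≤ 1 := by
  constructor
  · exact Finset.prod_pos fun i _ => psi_pos _
  · calc (∏ i : Fin n, psi (b i)) ≤ ∏ i : Fin n, 1 :=
          Finset.prod_le_prod (fun i _ => (psi_pos _).le) (fun i _ => psi_le_one _)
    _ = 1 := by simp

lemma μn_nonneg (n : ℕ) (p : Bool × Bool × (Fin n → Bool)) : 0 ≤ μn n p := by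
  obtain ⟨x, a, b⟩ := p
  have h1 := prod_psi_le_one b
  have h2 : 0 < df n a := df_pos n a
  have h3 : df n a ≤ 1/2 := df_le n a
  have h4 : 0 ≤ df n a * ∏ i : Fin n, psi (b i) := mul_nonneg h2.le h1.1.le
  have h5 : df n a * ∏ i : Fin n, psi (b i) ≤ 1/2 := by
    calc df n a * ∏ i : Fin n, psi (b i) ≤ (1/2) * 1 := by
          apply mul_le_mul h3 h1.2 h1.1.le (by norm_num)
    _ = 1/2 := by norm_num
  have h6 : (0:ℝ) ≤ ∏ i : Fin n, pB a (i : ℕ) (b i) :=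
    Finset.prod_nonneg fun i _ => (pB_pos _ _ _).le
  unfold μn
  dsimp only
  split_ifs <;> nlinarith

/-- sum over pi-type of products -/
lemma sum_pi {n : ℕ} (f : Fin n → Bool → ℝ) :
    ∑ b : Fin n → Bool, ∏ i, f i (b i) = ∏ i, (f i false + f i true) := by
  rw [← Fintype.prod_sum]
  exact Finset.prod_congr rfl fun i _ => by rw [Fintype.sum_bool]; ring

/-- the indicator of the event on b as a product -/
lemma ind_eq {n m : ℕ} (hm : m ≤ n) (s : Fin m → Bool) (b : Fin n → Bool) :
    (if (∀ i : Fin m, b (Fin.castLE hm i) = s i) then (1:ℝ) else 0)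
      = ∏ i : Fin n, (if h : (i : ℕ) < m then (if b i = s ⟨i, h⟩ then (1:ℝ) else 0) else 1) := by
  by_cases H : ∀ i : Fin m, b (Fin.castLE hm i) = s i
  · rw [if_pos H]
    symm; apply Finset.prod_eq_one
    intro i _
    split_ifs with h h2
    · rfl
    · exfalso; apply h2
      have := H ⟨(i : ℕ), h⟩
      have hc : Fin.castLE hm ⟨(i : ℕ), h⟩ = i := by
        apply Fin.ext; simp
      rwa [hc] at this
    · rfl
  · rw [if_neg H]
    push_neg at H
    obtain ⟨j, hj⟩ := H
    symm
    apply Finset.prod_eq_zero (Finset.mem_univ (Fin.castLE hm j))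
    have hjm : ((Fin.castLE hm j : Fin n) : ℕ) < m := by simpa using j.isLt
    rw [dif_pos hjm]
    rw [if_neg]
    intro hc
    apply hj
    rw [hc]
    congr 1

/-- splitting the sum defining prob of event -/
lemma prob_split (n : ℕ) (μ : Bool × Bool × (Fin n → Bool) → ℝ) (a : Bool)
    (P : (Fin n → Bool) → Prop) [DecidablePred P] :
    (∑ p : Bool × Bool × (Fin n → Bool), if (p.2.1 = a ∧ P p.2.2) then μ p else 0)
    = ∑ b : Fin n → Bool, if P b then (μ (true, a, b) + μ (false, a, b)) else 0 := by
  rw [Fintype.sum_prod_type, Fintype.sum_bool]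
  rw [Fintype.sum_prod_type, Fintype.sum_prod_type, Fintype.sum_bool, Fintype.sum_bool]
  cases a
  · simp only [show (true = false) = False by simp, show (false = false) = True by simp,
      false_and, true_and, if_false]
    simp only [Finset.sum_const_zero]
    rw [zero_add, zero_add, ← Finset.sum_add_distrib]
    apply Finset.sum_congr rfl
    intro b _
    by_cases H : P b <;> simp [H]
  · simp only [show (false = true) = False by simp, show (true = true) = True by simp,
      false_and, true_and, if_false]
    simp only [Finset.sum_const_zero]
    rw [add_zero, add_zero, ← Finset.sum_add_distrib]
    apply Finset.sum_congr rfl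
    intro b _
    by_cases H : P b <;> simp [H]

lemma probX_split (n : ℕ) (μ : Bool × Bool × (Fin n → Bool) → ℝ) (a : Bool)
    (P : (Fin n → Bool) → Prop) [DecidablePred P] :
    (∑ p : Bool × Bool × (Fin n → Bool), if (p.1 = true ∧ (p.2.1 = a ∧ P p.2.2)) then μ p else 0)
    = ∑ b : Fin n → Bool, if P b then μ (true, a, b) else 0 := by
  rw [Fintype.sum_prod_type, Fintype.sum_bool]
  rw [Fintype.sum_prod_type, Fintype.sum_prod_type, Fintype.sum_bool, Fintype.sum_bool]
  cases a
  · simp only [show (true = false) = False by simp, show (false = false) = True by simp,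
      show (false = true) = False by simp, show (true = true) = True by simp,
      false_and, true_and, and_false, and_true, if_false]
    simp only [Finset.sum_const_zero]
    ring
  · simp only [show (false = true) = False by simp, show (true = true) = True by simp,
      false_and, true_and, and_false, and_true, if_false]
    simp only [Finset.sum_const_zero]
    ring

lemma μn_pair (n : ℕ) (a : Bool) (b : Fin n → Bool) :
    μn n (true, a, b) + μn n (false, a, b) = 1/2 * ∏ i : Fin n, pB a (i : ℕ) (b i) := by
  unfold μn; simp; ring

lemma μn_true (n : ℕ) (a : Bool) (b : Fin n → Bool) :
    μn n (true, a, b) = 1/4 * (∏ i : Fin n, pB a (i : ℕ) (b i))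
      + df n a / 2 * ∏ i : Fin n, (pB a (i : ℕ) (b i) * psi (b i)) := by
  unfold μn; simp [Finset.prod_mul_distrib]; ring

lemma prob_event (n m : ℕ) (hm : m ≤ n) (a : Bool) (s : Fin m → Bool) :
    prob (μn n) (event n m hm a s)
      = 1/2 * ∏ i : Fin n, (if h : (i : ℕ) < m then pB a (i : ℕ) (s ⟨i, h⟩) else 1) := by
  unfold prob event
  rw [prob_split n (μn n) a (fun b => ∀ i : Fin m, b (Fin.castLE hm i) = s i)]
  have : ∀ b : Fin n → Bool,
      (if (∀ i : Fin m, b (Fin.castLE hm i) = s i) then (μn n (true, a, b) + μn n (false, a, b)) else 0)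
      = 1/2 * ∏ i : Fin n,
          ((if h : (i : ℕ) < m then (if b i = s ⟨i, h⟩ then (1:ℝ) else 0) else 1)
            * pB a (i : ℕ) (b i)) := by
    intro b
    rw [Finset.prod_mul_distrib, ← ind_eq hm s b, μn_pair]
    by_cases H : ∀ i : Fin m, b (Fin.castLE hm i) = s i <;> simp [H]
  rw [Finset.sum_congr rfl fun b _ => this b]
  rw [← Finset.mul_sum]
  rw [sum_pi (fun i c => (if h : (i : ℕ) < m then (if c = s ⟨i, h⟩ then (1:ℝ) else 0) else 1)
        * pB a (i : ℕ) c)]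
  congr 1
  apply Finset.prod_congr rfl
  intro i _
  by_cases h : (i : ℕ) < m
  · rw [dif_pos h, dif_pos h, dif_pos h]
    cases hs : s ⟨i, h⟩ <;> simp [hs] <;> ring
  · rw [dif_neg h, dif_neg h, dif_neg h]
    rw [one_mul, one_mul, pB_sum]

lemma probX_event (n m : ℕ) (hm : m ≤ n) (a : Bool) (s : Fin m → Bool) :
    prob (μn n) (fun p => p.1 = true ∧ event n m hm a s p)
      = 1/4 * (∏ i : Fin n, (if h : (i : ℕ) < m then pB a (i : ℕ) (s ⟨i, h⟩) else 1))
        + df n a / 2 * ∏ i : Fin n,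
            (if h : (i : ℕ) < m then pB a (i : ℕ) (s ⟨i, h⟩) * psi (s ⟨i, h⟩) else Mf a (i : ℕ)) := by
  unfold prob event
  rw [probX_split n (μn n) a (fun b => ∀ i : Fin m, b (Fin.castLE hm i) = s i)]
  have : ∀ b : Fin n → Bool,
      (if (∀ i : Fin m, b (Fin.castLE hm i) = s i) then μn n (true, a, b) else 0)
      = 1/4 * ∏ i : Fin n,
          ((if h : (i : ℕ) < m then (if b i = s ⟨i, h⟩ then (1:ℝ) else 0) else 1)
            * pB a (i : ℕ) (b i))
        + df n a / 2 * ∏ i : Fin n,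
          ((if h : (i : ℕ) < m then (if b i = s ⟨i, h⟩ then (1:ℝ) else 0) else 1)
            * (pB a (i : ℕ) (b i) * psi (b i))) := by
    intro b
    rw [Finset.prod_mul_distrib, Finset.prod_mul_distrib, ← ind_eq hm s b, μn_true]
    by_cases H : ∀ i : Fin m, b (Fin.castLE hm i) = s i <;> simp [H, Finset.prod_mul_distrib]
  rw [Finset.sum_congr rfl fun b _ => this b]
  rw [Finset.sum_add_distrib, ← Finset.mul_sum, ← Finset.mul_sum]
  rw [sum_pi (fun i c => (if h : (i : ℕ) < m then (if c = s ⟨i, h⟩ then (1:ℝ) else 0) else 1)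
        * pB a (i : ℕ) c)]
  rw [sum_pi (fun i c => (if h : (i : ℕ) < m then (if c = s ⟨i, h⟩ then (1:ℝ) else 0) else 1)
        * (pB a (i : ℕ) c * psi c))]
  congr 1
  · congr 1
    apply Finset.prod_congr rfl
    intro i _
    by_cases h : (i : ℕ) < m
    · rw [dif_pos h, dif_pos h, dif_pos h]
      cases hs : s ⟨i, h⟩ <;> simp [hs] <;> ring
    · rw [dif_neg h, dif_neg h, dif_neg h]
      rw [one_mul, one_mul, pB_sum]
  · congr 1
    apply Finset.prod_congr rfl
    intro i _
    by_cases h : (i : ℕ) < m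
    · rw [dif_pos h, dif_pos h, dif_pos h]
      cases hs : s ⟨i, h⟩ <;> simp [hs, psi] <;> ring
    · rw [dif_neg h, dif_neg h, dif_neg h]
      rw [one_mul, one_mul, pB_psi_sum]

lemma μn_sum (n : ℕ) : ∑ p, μn n p = 1 := by
  have h : ∀ a : Bool, ∑ b : Fin n → Bool, (1/2 * ∏ i : Fin n, pB a (i : ℕ) (b i)) = 1/2 := by
    intro a
    rw [← Finset.mul_sum, sum_pi (fun i c => pB a (i : ℕ) c)]
    have : ∏ i : Fin n, (pB a (i : ℕ) false + pB a (i : ℕ) true) = 1 :=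
      Finset.prod_eq_one fun i _ => pB_sum a i
    rw [this]; norm_num
  rw [Fintype.sum_prod_type, Fintype.sum_bool]
  simp only [Fintype.sum_prod_type, Fintype.sum_bool]
  have e : ∀ x a, ∑ b : Fin n → Bool, μn n (x, a, b)
      = ∑ b : Fin n → Bool, μn n (x, a, b) := fun _ _ => rfl
  have combine : ∀ a : Bool, (∑ b : Fin n → Bool, μn n (true, a, b))
      + (∑ b : Fin n → Bool, μn n (false, a, b)) = 1/2 := by
    intro a
    rw [← Finset.sum_add_distrib]
    rw [Finset.sum_congr rfl fun b _ => μn_pair n a b]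
    exact h a
  have := combine true
  have := combine false
  linarith [combine true, combine false]

end SimpsonAux

open SimpsonAux

/-- Existence of the `n`-factor Simpson's Paradox: a probability distribution on
`(X, A, B1, ..., Bn)` in which the conclusion about the effect of `A` on `X`
reverses each time an additional factor `Bi` is introduced. -/
theorem nFactor_simpson_paradox_exists (n : ℕ) (hn : 0 < n) :
    ∃ μ : Bool × Bool × (Fin n → Bool) → ℝ,
      (∀ p, 0 ≤ μ p) ∧ (∑ p, μ p = 1) ∧
      ∀ (m : ℕ) (hm : m ≤ n) (s : Fin m → Bool),
        0 < prob μ (event n m hm true s) ∧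
        0 < prob μ (event n m hm false s) ∧
        (Even m →
          condProb μ (fun p => p.1 = true) (event n m hm true s) >
          condProb μ (fun p => p.1 = true) (event n m hm false s)) ∧
        (Odd m →
          condProb μ (fun p => p.1 = true) (event n m hm true s) <
          condProb μ (fun p => p.1 = true) (event n m hm false s)) := by
  refine ⟨μn n, μn_nonneg n, μn_sum n, ?_⟩
  intro m hm s
  -- notation
  set P : Bool → ℝ :=
    fun a => ∏ i : Fin n, (if h : (i : ℕ) < m then pB a (i : ℕ) (s ⟨i, h⟩) else 1) with hPdef
  have hPpos : ∀ a, 0 < P a := by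
    intro a
    apply Finset.prod_pos
    intro i _
    by_cases h : (i : ℕ) < m
    · rw [dif_pos h]; exact pB_pos _ _ _
    · rw [dif_neg h]; norm_num
  set Ψ : ℝ := ∏ i : Fin n, (if h : (i : ℕ) < m then psi (s ⟨i, h⟩) else 1) with hΨdef
  have hΨpos : 0 < Ψ := by
    apply Finset.prod_pos
    intro i _
    by_cases h : (i : ℕ) < m
    · rw [dif_pos h]; exact psi_pos _
    · rw [dif_neg h]; norm_num
  set K : Bool → ℝ := fun a => ∏ i ∈ Finset.Ico m n, Mf a i with hKdef
  have hKpos : ∀ a, 0 < K a := fun a => Finset.prod_pos fun i _ => Mf_pos _ _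
  -- conditional probability formula
  have hcond : ∀ a : Bool, condProb (μn n) (fun p => p.1 = true) (event n m hm a s)
      = 1/2 + df n a * (Ψ * K a) := by
    intro a
    unfold condProb
    rw [probX_event n m hm a s, prob_event n m hm a s]
    have hQ : (∏ i : Fin n,
        (if h : (i : ℕ) < m then pB a (i : ℕ) (s ⟨i, h⟩) * psi (s ⟨i, h⟩) else Mf a (i : ℕ)))
        = P a * (Ψ * (∏ i : Fin n, (if (i : ℕ) < m then 1 else Mf a (i : ℕ)))) := by
      rw [hPdef, hΨdef, ← Finset.prod_mul_distrib, ← Finset.prod_mul_distrib]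
      apply Finset.prod_congr rfl
      intro i _
      by_cases h : (i : ℕ) < m
      · rw [dif_pos h, dif_pos h, dif_pos h, if_pos h]; ring
      · rw [dif_neg h, dif_neg h, dif_neg h, if_neg h]; ring
    have hKeq : (∏ i : Fin n, (if (i : ℕ) < m then (1:ℝ) else Mf a (i : ℕ))) = K a := by
      rw [hKdef]
      rw [Fin.prod_univ_eq_prod_range (fun j => if j < m then (1:ℝ) else Mf a j) n]
      rw [Finset.range_eq_Ico, ← Finset.prod_Ico_consecutive _ (Nat.zero_le m) hm]
      have h1 : (∏ i ∈ Finset.Ico 0 m, (if i < m then (1:ℝ) else Mf a i)) = 1 := by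
        apply Finset.prod_eq_one
        intro i hi
        rw [if_pos (Finset.mem_Ico.mp hi).2]
      have h2 : (∏ i ∈ Finset.Ico m n, (if i < m then (1:ℝ) else Mf a i))
          = ∏ i ∈ Finset.Ico m n, Mf a i := by
        apply Finset.prod_congr rfl
        intro i hi
        have him := (Finset.mem_Ico.mp hi).1
        rw [if_neg (by omega)]
      rw [h1, h2, one_mul]
    rw [hQ, hKeq]
    have hne : (1/2 : ℝ) * P a ≠ 0 := (mul_pos (by norm_num) (hPpos a)).ne'
    rw [div_eq_iff hne]
    ring
  rw [hcond true, hcond false]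
  have hprobt : prob (μn n) (event n m hm true s) = 1/2 * P true := prob_event n m hm true s
  have hprobf : prob (μn n) (event n m hm false s) = 1/2 * P false := prob_event n m hm false s
  refine ⟨by rw [hprobt]; have := hPpos true; linarith, by rw [hprobf]; have := hPpos false; linarith, ?_, ?_⟩
  · intro hEven
    have hk := (key n (n - m) m (by omega)).1 (Nat.even_iff.mp hEven)
    have h1 := hKpos false
    have h2 := df_pos n false
    have h3 : 0 < df n false * K false := mul_pos h2 h1
    nlinarith [mul_pos hΨpos h3]
  · intro hOdd
    have hk := (key n (n - m) m (by omega)).2 (Nat.odd_iff.mp hOdd)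
    have h1 := hKpos true
    have h2 := df_pos n true
    have h3 : 0 < df n true * K true := mul_pos h2 h1
    nlinarith [mul_pos hΨpos h3]
end
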